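/- arXiv:2205.10836 — 2 statements merged into one kernel-verified Lean document; each statement's English description precedes it below -/
import Mathlib

section
/- Every fair-chores instance with n agents and items on a line admits a connected PROP1 allocation, i.e., a partition of the items into n connected bundles A_1, ..., A_n such that for every agent i, either A_i is empty or there exists an item e in A_i with A_i \ {e} connected and v_i(A_i \ {e}) >= -1/n. -/
open Finset

noncomputable section

/-- The value of a bundle `S` of items under additive (item-level) valuation `v`. -/
def bundleVal {m : ℕ} (v : Fin m → ℝ) (S : Finset (Fin m)) : ℝ := ∑ e ∈ S, v e

/-- A bundle is connected if it is an interval of the line `e_1, …, e_m`. -/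
def IsConnBundle {m : ℕ} (S : Finset (Fin m)) : Prop :=
  ∀ a ∈ S, ∀ c ∈ S, ∀ b : Fin m, a ≤ b → b ≤ c → b ∈ S

/-- A connected allocation: pairwise disjoint connected bundles covering all items. -/
def ConnAlloc (n m : ℕ) (A : Fin n → Finset (Fin m)) : Prop :=
  (∀ i, IsConnBundle (A i)) ∧
  (∀ i j : Fin n, i ≠ j → Disjoint (A i) (A j)) ∧
  (∀ e : Fin m, ∃ i, e ∈ A i)

/-- The maximin share of an agent with valuation `v`: the maximum over connected
`n`-partitions of the minimum bundle value. -/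
def mmsVal (n m : ℕ) (v : Fin m → ℝ) : ℝ :=
  sSup { x : ℝ | ∃ A : Fin n → Finset (Fin m), ConnAlloc n m A ∧ x = ⨅ j, bundleVal v (A j) }

/-- Utilitarian welfare of an allocation. -/
def utilW (n m : ℕ) (v : Fin n → Fin m → ℝ) (A : Fin n → Finset (Fin m)) : ℝ :=
  ∑ i, bundleVal (v i) (A i)

/-- Egalitarian welfare of an allocation. -/
def egalW (n m : ℕ) (v : Fin n → Fin m → ℝ) (A : Fin n → Finset (Fin m)) : ℝ :=
  ⨅ i, bundleVal (v i) (A i)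

/-- Optimal utilitarian welfare over all connected allocations. -/
def optU (n m : ℕ) (v : Fin n → Fin m → ℝ) : ℝ :=
  sSup { x : ℝ | ∃ A, ConnAlloc n m A ∧ x = utilW n m v A }

/-- Optimal egalitarian welfare over all connected allocations. -/
def optE (n m : ℕ) (v : Fin n → Fin m → ℝ) : ℝ :=
  sSup { x : ℝ | ∃ A, ConnAlloc n m A ∧ x = egalW n m v A }

/-- A connected allocation of chores is PROP1 if every agent's bundle is either empty or
contains an item whose removal keeps the bundle connected and brings the agent's value
up to at least `-1/n`. -/
def Prop1Chores (n m : ℕ) (v : Fin n → Fin m → ℝ) (A : Fin n → Finset (Fin m)) : Prop :=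
  ∀ i, A i = ∅ ∨ ∃ e ∈ A i, IsConnBundle (A i \ {e}) ∧
    -(1 / (n : ℝ)) ≤ bundleVal (v i) (A i \ {e})

/-- interval of items with value in `[a, b)`. -/
def Itv (m a b : ℕ) : Finset (Fin m) := Finset.univ.filter (fun e => a ≤ e.val ∧ e.val < b)

lemma mem_Itv {m a b : ℕ} {e : Fin m} : e ∈ Itv m a b ↔ a ≤ e.val ∧ e.val < b := by
  simp [Itv]

lemma Itv_conn {m a b : ℕ} : IsConnBundle (Itv m a b) := by
  intro x hx y hy z hxz hzy
  rw [mem_Itv] at *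
  exact ⟨le_trans hx.1 hxz, lt_of_le_of_lt hzy hy.2⟩

lemma Itv_self {m a : ℕ} : Itv m a a = ∅ := by
  ext e; simp only [mem_Itv, Finset.notMem_empty, iff_false]; omega

lemma Itv_subset {m a b c d : ℕ} (h1 : c ≤ a) (h2 : b ≤ d) : Itv m a b ⊆ Itv m c d := by
  intro e he; rw [mem_Itv] at *; omega

lemma Itv_disj {m a b c : ℕ} : Disjoint (Itv m a b) (Itv m b c) := by
  rw [Finset.disjoint_left]; intro e he he'; rw [mem_Itv] at *; omega

lemma Itv_union {m a b c : ℕ} (h1 : a ≤ b) (h2 : b ≤ c) :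
    Itv m a b ∪ Itv m b c = Itv m a c := by
  ext e; simp only [Finset.mem_union, mem_Itv]; omega

lemma Itv_split {m : ℕ} (v : Fin m → ℝ) {a b c : ℕ} (h1 : a ≤ b) (h2 : b ≤ c) :
    bundleVal v (Itv m a c) = bundleVal v (Itv m a b) + bundleVal v (Itv m b c) := by
  rw [bundleVal, bundleVal, bundleVal, ← Finset.sum_union Itv_disj, Itv_union h1 h2]

lemma bundleVal_nonpos {m : ℕ} {v : Fin m → ℝ} (hv : ∀ j, v j ≤ 0) (S : Finset (Fin m)) :
    bundleVal v S ≤ 0 :=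
  Finset.sum_nonpos (fun e _ => hv e)

lemma Itv_sdiff {m a b : ℕ} (h1 : a < b) (h2 : b ≤ m) (hb : b - 1 < m) :
    Itv m a b \ {(⟨b - 1, hb⟩ : Fin m)} = Itv m a (b - 1) := by
  ext e
  simp only [Finset.mem_sdiff, Finset.mem_singleton, mem_Itv, Fin.ext_iff]
  omega

lemma key (n m : ℕ) (v : Fin n → Fin m → ℝ) (hneg : ∀ i j, v i j ≤ 0) :
    ∀ (k : ℕ) (S : Finset (Fin n)) (a : ℕ), S.card = k + 1 → a ≤ m →
    (∀ i ∈ S, -(((k : ℝ) + 1) / n) ≤ bundleVal (v i) (Itv m a m)) →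
    ∃ A : Fin n → Finset (Fin m),
      (∀ i, IsConnBundle (A i)) ∧
      (∀ i j, i ≠ j → Disjoint (A i) (A j)) ∧
      (∀ e : Fin m, a ≤ e.val → ∃ i, e ∈ A i) ∧
      (∀ i, A i ⊆ Itv m a m) ∧
      (∀ i, i ∉ S → A i = ∅) ∧
      (∀ i, A i = ∅ ∨ ∃ e ∈ A i, IsConnBundle (A i \ {e}) ∧
        -(1 / (n : ℝ)) ≤ bundleVal (v i) (A i \ {e})) := by
  intro k
  induction k with
  | zero =>
    intro S a hcard ham hval
    obtain ⟨i1, hi1⟩ := Finset.card_eq_one.mp hcard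
    subst hi1
    have hval1 : -(1 / (n : ℝ)) ≤ bundleVal (v i1) (Itv m a m) := by
      have := hval i1 (Finset.mem_singleton_self i1)
      push_cast at this
      linarith
    refine ⟨fun i => if i = i1 then Itv m a m else ∅, ?_, ?_, ?_, ?_, ?_, ?_⟩
    · intro i
      by_cases h : i = i1
      · try dsimp only; rw [if_pos h]; exact Itv_conn
      · try dsimp only; rw [if_neg h]; intro x hx; exact absurd hx (Finset.notMem_empty x)
    · intro i j hij
      by_cases h : i = i1 <;> by_cases h' : j = i1 <;> simp_all
    · intro e he
      refine ⟨i1, ?_⟩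
      try try dsimp only; rw [if_pos rfl, mem_Itv]; exact ⟨he, e.isLt⟩
    · intro i
      by_cases h : i = i1
      · try dsimp only; rw [if_pos h]
      · try dsimp only; rw [if_neg h]; exact Finset.empty_subset _
    · intro i hi
      simp only [Finset.mem_singleton] at hi
      try dsimp only; rw [if_neg hi]
    · intro i
      by_cases h : i = i1
      · subst h
        by_cases hm : a < m
        · right
          have hb : m - 1 < m := by omega
          refine ⟨⟨m - 1, hb⟩, ?_, ?_, ?_⟩
          · try try dsimp only; rw [if_pos rfl]; simp only [mem_Itv, Fin.val_mk]; omega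
          · try dsimp only; rw [if_pos rfl, Itv_sdiff hm le_rfl hb]; exact Itv_conn
          · try dsimp only; rw [if_pos rfl, Itv_sdiff hm le_rfl hb]
            have hsplit := Itv_split (v i) (a := a) (b := m - 1) (c := m) (by omega) (by omega)
            have h2 : bundleVal (v i) (Itv m (m - 1) m) ≤ 0 :=
              bundleVal_nonpos (hneg i) _
            linarith
        · left; try dsimp only; rw [if_pos rfl]
          ext e; simp only [mem_Itv, Finset.notMem_empty, iff_false]
          have := e.isLt; omega
      · left; try dsimp only; rw [if_neg h]
  | succ k ih =>
    intro S a hcard ham hval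
    by_cases hm : a < m
    · classical
      -- greedy cut function
      have hqex : ∃ qf : Fin n → ℕ, ∀ i,
          a + 1 ≤ qf i ∧ qf i ≤ m ∧
          (-(1 / (n : ℝ)) ≤ bundleVal (v i) (Itv m a (qf i - 1))) ∧
          (qf i < m → bundleVal (v i) (Itv m a (qf i)) < -(1 / (n : ℝ))) := by
        set P : Fin n → ℕ → Prop :=
          fun i q => a + 1 ≤ q ∧ -(1 / (n : ℝ)) ≤ bundleVal (v i) (Itv m a (q - 1)) with hP
        have hPbase : ∀ i, P i (a + 1) := by
          intro i
          refine ⟨le_rfl, ?_⟩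
          simp only [Nat.add_sub_cancel, Itv_self, bundleVal, Finset.sum_empty]
          have : (0:ℝ) ≤ 1 / (n : ℝ) := by positivity
          linarith
        refine ⟨fun i => Nat.findGreatest (P i) m, fun i => ?_⟩
        dsimp only
        have h1 : a + 1 ≤ Nat.findGreatest (P i) m :=
          Nat.le_findGreatest (by omega) (hPbase i)
        have h2 : Nat.findGreatest (P i) m ≤ m := Nat.findGreatest_le m
        have h3 : P i (Nat.findGreatest (P i) m) :=
          Nat.findGreatest_spec (by omega) (hPbase i)
        refine ⟨h1, h2, h3.2, fun hlt => ?_⟩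
        have hlt' : Nat.findGreatest (P i) m < m := hlt
        have hlt2 : Nat.findGreatest
            (fun q => a + 1 ≤ q ∧ -(1 / (n : ℝ)) ≤ bundleVal (v i) (Itv m a (q - 1))) m < m := hlt
        have hef : Nat.findGreatest (P i) m = Nat.findGreatest
            (fun q => a + 1 ≤ q ∧ -(1 / (n : ℝ)) ≤ bundleVal (v i) (Itv m a (q - 1))) m := rfl
        have h4 : ¬ P i (Nat.findGreatest (P i) m + 1) :=
          Nat.findGreatest_is_greatest (P := P i) (n := m) (by omega) (by omega)
        by_contra hcon
        push_neg at hcon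
        exact h4 ⟨by omega, hcon⟩
      obtain ⟨qf, hqf⟩ := hqex
      have hSne : S.Nonempty := Finset.card_pos.mp (by omega)
      obtain ⟨i0, hi0S, hi0max⟩ := S.exists_max_image qf hSne
      have hab : a + 1 ≤ qf i0 := (hqf i0).1
      have hbm : qf i0 ≤ m := (hqf i0).2.1
      have hn0 : 0 < n := Fin.pos i0
      -- bound for remaining agents
      have hrem : ∀ j ∈ S.erase i0,
          -(((k : ℝ) + 1) / n) ≤ bundleVal (v j) (Itv m (qf i0) m) := by
        intro j hj
        have hjS := Finset.mem_of_mem_erase hj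
        have hjb : qf j ≤ qf i0 := hi0max j hjS
        by_cases hqj : qf j < m
        · have hlt := (hqf j).2.2.2 hqj
          have hs1 := Itv_split (v j) (a := a) (b := qf i0) (c := m) (by omega) hbm
          have hs2 := Itv_split (v j) (a := a) (b := qf j) (c := qf i0)
            (by have := (hqf j).1; omega) hjb
          have h3 : bundleVal (v j) (Itv m (qf j) (qf i0)) ≤ 0 := bundleVal_nonpos (hneg j) _
          have h4 := hval j hjS
          push_cast at h4
          have hcast : -(((k : ℝ) + 1 + 1) / n) + 1 / n = -(((k : ℝ) + 1) / n) := by ring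
          linarith
        · have hbm' : qf i0 = m := by omega
          rw [hbm', Itv_self]
          have : (0:ℝ) ≤ ((k : ℝ) + 1) / n := by positivity
          simp only [bundleVal, Finset.sum_empty]; linarith
      have hcard' : (S.erase i0).card = k + 1 := by
        rw [Finset.card_erase_of_mem hi0S, hcard]; omega
      obtain ⟨A', hc', hd', hcov', hsub', hemp', hp'⟩ := ih (S.erase i0) (qf i0) hcard' hbm hrem
      have hA'i0 : A' i0 = ∅ := hemp' i0 (Finset.notMem_erase i0 S)
      refine ⟨fun i => if i = i0 then Itv m a (qf i0) else A' i, ?_, ?_, ?_, ?_, ?_, ?_⟩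
      · intro i
        by_cases h : i = i0
        · try dsimp only; rw [if_pos h]; exact Itv_conn
        · try dsimp only; rw [if_neg h]; exact hc' i
      · intro i j hij
        by_cases h : i = i0 <;> by_cases h' : j = i0
        · exact absurd (h.trans h'.symm) hij
        · try dsimp only; rw [if_pos h, if_neg h']
          exact Finset.disjoint_left.mpr fun e he he' =>
            Finset.disjoint_left.mp Itv_disj he (hsub' j he')
        · try dsimp only; rw [if_neg h, if_pos h']
          exact Finset.disjoint_left.mpr fun e he he' =>
            Finset.disjoint_left.mp Itv_disj he' (hsub' i he)
        · try dsimp only; rw [if_neg h, if_neg h']; exact hd' i j hij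
      · intro e he
        by_cases heb : e.val < qf i0
        · refine ⟨i0, ?_⟩
          try try dsimp only; rw [if_pos rfl, mem_Itv]; exact ⟨he, heb⟩
        · obtain ⟨i, hi⟩ := hcov' e (by omega)
          have hii0 : i ≠ i0 := by
            intro h; rw [h, hA'i0] at hi; exact Finset.notMem_empty e hi
          refine ⟨i, ?_⟩
          try dsimp only; rw [if_neg hii0]; exact hi
      · intro i
        by_cases h : i = i0
        · try dsimp only; rw [if_pos h]; exact Itv_subset le_rfl hbm
        · try dsimp only; rw [if_neg h]
          exact fun e he => Itv_subset (by omega) le_rfl (hsub' i he)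
      · intro i hi
        have h1 : i ≠ i0 := fun h => hi (h ▸ hi0S)
        try dsimp only; rw [if_neg h1]
        exact hemp' i (fun h => hi (Finset.mem_of_mem_erase h))
      · intro i
        by_cases h : i = i0
        · subst h
          right
          have hb1 : qf i - 1 < m := by omega
          refine ⟨⟨qf i - 1, hb1⟩, ?_, ?_, ?_⟩
          · try try dsimp only; rw [if_pos rfl]; simp only [mem_Itv, Fin.val_mk]; omega
          · try dsimp only; rw [if_pos rfl, Itv_sdiff (by omega) hbm hb1]; exact Itv_conn
          · try dsimp only; rw [if_pos rfl, Itv_sdiff (by omega) hbm hb1]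
            exact (hqf i).2.2.1
        · try dsimp only; rw [if_neg h]; exact hp' i
    · refine ⟨fun _ => ∅, ?_, ?_, ?_, ?_, ?_, ?_⟩
      · intro i x hx; exact absurd hx (Finset.notMem_empty x)
      · intro i j _; exact Finset.disjoint_empty_left _
      · intro e he; exact absurd e.isLt (by omega)
      · intro i; exact Finset.empty_subset _
      · intro i _; rfl
      · intro i; exact Or.inl rfl

/-- Every fair-chores instance with items on a line admits a connected
PROP1 allocation. -/
theorem chores_prop1_exists (n m : ℕ) (hn : 1 ≤ n)
    (v : Fin n → Fin m → ℝ)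
    (hneg : ∀ i j, v i j ≤ 0)
    (hnorm : ∀ i, bundleVal (v i) Finset.univ = -1) :
    ∃ A : Fin n → Finset (Fin m), ConnAlloc n m A ∧ Prop1Chores n m v A := by
  have huniv : Itv m 0 m = (Finset.univ : Finset (Fin m)) := by
    ext e
    simp only [mem_Itv, Finset.mem_univ, iff_true]
    exact ⟨Nat.zero_le _, e.isLt⟩
  obtain ⟨k, hk⟩ : ∃ k, n = k + 1 := ⟨n - 1, by omega⟩
  have hval : ∀ i ∈ (Finset.univ : Finset (Fin n)),
      -(((k : ℝ) + 1) / n) ≤ bundleVal (v i) (Itv m 0 m) := by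
    intro i _
    rw [huniv, hnorm i]
    have h1 : ((k : ℝ) + 1) / n = 1 := by
      subst hk
      push_cast
      exact div_self (by positivity)
    rw [h1]
  obtain ⟨A, hc, hd, hcov, -, -, hp⟩ :=
    key n m v hneg k Finset.univ 0 (by simp [hk]) (Nat.zero_le m) hval
  exact ⟨A, ⟨hc, hd, fun e => hcov e (Nat.zero_le _)⟩, hp⟩
end
end

section
/- For every fair-goods instance with exactly 2 agents, there exists a connected allocation A = (A_1, A_2) that is simultaneously MMS (v_i(A_i) >= MMS_i for i = 1, 2) and PROP1, and that moreover satisfies EW(A) = OPT_E, UW(A) >= 1, and UW(A) >= (2/3) * OPT_U. In particular, for two agents the price of MMS and of PROP1 with respect to egalitarian welfare is 1, and with respect to utilitarian welfare is at most 3/2. -/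
/-!
Everything follows from an egalitarian-optimal connected allocation `A`, which exists since there
are finitely many allocations. Swapping the two bundles of `A` cannot raise the worse value, which
forces `UW(A) ≥ 1`; letting the other agent of any partition pick its preferred piece shows
`MMS_i ≤ EW(A)`; and `UW(B) ≤ 1 + EW(B) ≤ 1 + EW(A) ≤ (3/2) UW(A)` for every `B`.
For PROP1, take among the egalitarian optima one maximising the number of items held by agents
below `1/2`. A bundle whose complement is also connected is a prefix or a suffix of the line, so
a poor agent can take the boundary item from the other agent. If it still stays below `1/2`,
comparing with the swapped allocation shows that the other agent keeps more than `1/2` without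
that item, so moving it gives another egalitarian optimum with a larger count.
-/

open Finset

noncomputable section

/-- A connected allocation of goods is PROP1 if every agent either already has value at
least `1/n`, or gets value at least `1/n` after adding one item keeping connectivity. -/
def Prop1Goods (n m : ℕ) (v : Fin n → Fin m → ℝ) (A : Fin n → Finset (Fin m)) : Prop :=
  ∀ i, (1 / (n : ℝ)) ≤ bundleVal (v i) (A i) ∨
    ∃ e : Fin m, e ∉ A i ∧ IsConnBundle (insert e (A i)) ∧
      (1 / (n : ℝ)) ≤ bundleVal (v i) (insert e (A i))

section OrdConnected

variable {α : Type*} {s : Set α}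

theorem isLowerSet_or_isUpperSet_of_ordConnected_compl [LinearOrder α]
    (hs : s.OrdConnected) (hsc : sᶜ.OrdConnected) : IsLowerSet s ∨ IsUpperSet s := by
  rw [or_iff_not_imp_left]
  intro hl c d hcd hc
  by_contra hd
  refine hl fun a b hba ha => ?_
  by_contra hb
  rcases le_total b c with hbc | hcb
  · exact hsc.out hb hd ⟨hbc, hcd⟩ hc
  · exact hb (hs.out hc ha ⟨hcb, hba⟩)

theorem IsLowerSet.exists_insert [PartialOrder α] [Finite α] (hs : IsLowerSet s)
    (h : s ≠ Set.univ) : ∃ e ∉ s, IsLowerSet (insert e s) := by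
  obtain ⟨e, he⟩ := (Set.toFinite sᶜ).exists_minimal (Set.nonempty_compl.2 h)
  refine ⟨e, he.prop, ?_⟩
  rintro a b hba (rfl | ha)
  · by_cases hb : b ∈ s
    · exact Or.inr hb
    · exact Or.inl (he.eq_of_le hb hba)
  · exact Or.inr (hs hba ha)

theorem IsUpperSet.exists_insert [PartialOrder α] [Finite α] (hs : IsUpperSet s)
    (h : s ≠ Set.univ) : ∃ e ∉ s, IsUpperSet (insert e s) :=
  IsLowerSet.exists_insert (α := αᵒᵈ) hs h

theorem Set.OrdConnected.exists_insert_of_compl [LinearOrder α] [Finite α]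
    (hs : s.OrdConnected) (hsc : sᶜ.OrdConnected) (h : s ≠ Set.univ) :
    ∃ e ∉ s, (insert e s).OrdConnected ∧ (insert e s)ᶜ.OrdConnected := by
  rcases isLowerSet_or_isUpperSet_of_ordConnected_compl hs hsc with hs | hs
  · obtain ⟨e, he, hs⟩ := hs.exists_insert h
    exact ⟨e, he, hs.ordConnected, hs.compl.ordConnected⟩
  · obtain ⟨e, he, hs⟩ := hs.exists_insert h
    exact ⟨e, he, hs.ordConnected, hs.compl.ordConnected⟩

end OrdConnected

section Bundles

variable {m : ℕ}

theorem isConnBundle_iff_ordConnected {S : Finset (Fin m)} :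
    IsConnBundle S ↔ (S : Set (Fin m)).OrdConnected :=
  ⟨fun h => ⟨fun _ ha _ hc _ hb => h _ ha _ hc _ hb.1 hb.2⟩,
    fun h _ ha _ hc _ hab hbc => h.out ha hc ⟨hab, hbc⟩⟩

theorem IsConnBundle.exists_insert_of_compl {S : Finset (Fin m)} (hS : IsConnBundle S)
    (hSc : IsConnBundle Sᶜ) (h : S ≠ univ) :
    ∃ e ∉ S, IsConnBundle (insert e S) ∧ IsConnBundle (insert e S)ᶜ := by
  rw [isConnBundle_iff_ordConnected] at hS
  rw [isConnBundle_iff_ordConnected, coe_compl] at hSc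
  simpa only [isConnBundle_iff_ordConnected, coe_compl, coe_insert, mem_coe] using
    hS.exists_insert_of_compl hSc (by rwa [Ne, coe_eq_univ])

theorem bundleVal_mono {v : Fin m → ℝ} (hv : ∀ e, 0 ≤ v e) {S T : Finset (Fin m)}
    (h : S ⊆ T) : bundleVal v S ≤ bundleVal v T :=
  sum_le_sum_of_subset_of_nonneg h fun e _ _ => hv e

theorem bundleVal_compl (v : Fin m → ℝ) (S : Finset (Fin m)) :
    bundleVal v Sᶜ = bundleVal v univ - bundleVal v S := by
  rw [eq_sub_iff_add_eq]
  exact sum_compl_add_sum S v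

end Bundles

section Allocations

variable {n m : ℕ} {v : Fin n → Fin m → ℝ} {A A₀ : Fin n → Finset (Fin m)}

theorem egalW_le_bundleVal (v : Fin n → Fin m → ℝ) (A : Fin n → Finset (Fin m))
    (i : Fin n) : egalW n m v A ≤ bundleVal (v i) (A i) :=
  ciInf_le (Set.finite_range _).bddBelow i

def IsEgalOptimal (n m : ℕ) (v : Fin n → Fin m → ℝ) (A : Fin n → Finset (Fin m)) : Prop :=
  ConnAlloc n m A ∧ ∀ B, ConnAlloc n m B → egalW n m v B ≤ egalW n m v A

theorem IsEgalOptimal.optE_eq (hA : IsEgalOptimal n m v A) : optE n m v = egalW n m v A :=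
  IsGreatest.csSup_eq ⟨⟨A, hA.1, rfl⟩, by rintro _ ⟨B, hB, rfl⟩; exact hA.2 B hB⟩

theorem exists_isEgalOptimal (v : Fin n → Fin m → ℝ) (hA₀ : ConnAlloc n m A₀) :
    ∃ A, IsEgalOptimal n m v A := by
  classical
  obtain ⟨A, hA, hmax⟩ :=
    exists_max_image (univ.filter (ConnAlloc n m)) (egalW n m v) ⟨A₀, by simpa using hA₀⟩
  exact ⟨A, (mem_filter.1 hA).2, fun B hB => hmax B (by simpa using hB)⟩

def poorBundleCard (n m : ℕ) (v : Fin n → Fin m → ℝ) (A : Fin n → Finset (Fin m)) : ℕ :=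
  ∑ i, if bundleVal (v i) (A i) < 1 / (n : ℝ) then (A i).card else 0

end Allocations

section TwoAgents

variable {m : ℕ} {v : Fin 2 → Fin m → ℝ} {A X : Fin 2 → Finset (Fin m)} {i j : Fin 2}
  {S : Finset (Fin m)}

theorem Fin.univ_eq_pair_of_ne (hij : i ≠ j) : (univ : Finset (Fin 2)) = {i, j} := by
  revert i j; decide

theorem Fin.eq_or_eq_of_ne (hij : i ≠ j) (k : Fin 2) : k = i ∨ k = j := by
  simpa [Fin.univ_eq_pair_of_ne hij] using mem_univ k

theorem ciInf_fin_two_of_ne {α : Type*} [ConditionallyCompleteLinearOrder α] (f : Fin 2 → α)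
    (hij : i ≠ j) : ⨅ k, f k = min (f i) (f j) := by
  rw [← inf'_univ_eq_ciInf]
  simp [Fin.univ_eq_pair_of_ne hij]

theorem egalW_two (hij : i ≠ j) :
    egalW 2 m v A = min (bundleVal (v i) (A i)) (bundleVal (v j) (A j)) :=
  ciInf_fin_two_of_ne _ hij

theorem utilW_two (hij : i ≠ j) :
    utilW 2 m v A = bundleVal (v i) (A i) + bundleVal (v j) (A j) := by
  rw [utilW, Fin.univ_eq_pair_of_ne hij, sum_pair hij]

theorem ConnAlloc.eq_compl (hA : ConnAlloc 2 m A) (hij : i ≠ j) : A j = (A i)ᶜ := by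
  ext e
  rw [mem_compl]
  refine ⟨fun hj hi => disjoint_left.1 (hA.2.1 i j hij) hi hj, fun hi => ?_⟩
  obtain ⟨k, hk⟩ := hA.2.2 e
  rcases Fin.eq_or_eq_of_ne hij k with rfl | rfl
  · exact absurd hk hi
  · exact hk

def giveTo (i : Fin 2) (S : Finset (Fin m)) : Fin 2 → Finset (Fin m) :=
  fun k => if k = i then S else Sᶜ

@[simp]
theorem giveTo_self : giveTo i S i = S := if_pos rfl

theorem giveTo_of_ne (hij : i ≠ j) : giveTo i S j = Sᶜ := if_neg hij.symm

theorem connAlloc_giveTo (hS : IsConnBundle S) (hSc : IsConnBundle Sᶜ) :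
    ConnAlloc 2 m (giveTo i S) := by
  refine ⟨fun k => ?_, fun k l hkl => ?_, fun e => ?_⟩
  · unfold giveTo; split_ifs <;> assumption
  · unfold giveTo
    split_ifs with hk hl hl
    · exact absurd (hk.trans hl.symm) hkl
    · exact disjoint_compl_right
    · exact disjoint_compl_left
    · fin_cases i <;> fin_cases k <;> fin_cases l <;> simp_all
  · obtain ⟨j, hji⟩ := exists_ne i
    by_cases he : e ∈ S
    · exact ⟨i, by simpa using he⟩
    · exact ⟨j, by simpa [giveTo_of_ne hji.symm] using he⟩

theorem ConnAlloc.connAlloc_giveTo_compl (hA : ConnAlloc 2 m A) (hij : i ≠ j) :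
    ConnAlloc 2 m (giveTo i (A i)ᶜ) :=
  connAlloc_giveTo (hA.eq_compl hij ▸ hA.1 j) (by simpa using hA.1 i)

variable (hnorm : ∀ i, bundleVal (v i) univ = 1)
include hnorm

theorem IsEgalOptimal.one_le_utilW (hA : IsEgalOptimal 2 m v A) : 1 ≤ utilW 2 m v A := by
  have h01 : (0 : Fin 2) ≠ 1 := by decide
  have hswap := hA.2 _ (hA.1.connAlloc_giveTo_compl h01)
  rw [egalW_two h01, egalW_two h01, giveTo_self, giveTo_of_ne h01, compl_compl,
    hA.1.eq_compl h01, bundleVal_compl, bundleVal_compl, hnorm, hnorm] at hswap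
  rw [utilW_two h01, hA.1.eq_compl h01, bundleVal_compl, hnorm]
  set a := bundleVal (v 0) (A 0)
  set c := bundleVal (v 1) (A 0)
  -- if `a + (1 - c) < 1`, swapping the two bundles strictly raises the minimum
  by_contra! h
  have := min_le_left a (1 - c)
  have := min_le_right a (1 - c)
  exact hswap.not_gt (lt_min (by linarith) (by linarith))

theorem ConnAlloc.min_le_egalW (hX : ConnAlloc 2 m X) (hij : i ≠ j)
    (h : 1 / 2 ≤ bundleVal (v j) (X j)) :
    min (bundleVal (v i) (X i)) (bundleVal (v i) (X j)) ≤ egalW 2 m v X := by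
  rw [egalW_two hij]
  refine le_min (min_le_left _ _) (le_trans ?_ h)
  have := min_le_left (bundleVal (v i) (X i)) (bundleVal (v i) (X j))
  have := min_le_right (bundleVal (v i) (X i)) (bundleVal (v i) (X j))
  rw [hX.eq_compl hij, bundleVal_compl, hnorm] at *
  linarith

theorem IsEgalOptimal.mmsVal_le (hA : IsEgalOptimal 2 m v A) (i : Fin 2) :
    mmsVal 2 m (v i) ≤ egalW 2 m v A := by
  obtain ⟨j, hji⟩ := exists_ne i
  have hij := hji.symm
  refine csSup_le ⟨_, A, hA.1, rfl⟩ ?_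
  rintro _ ⟨X, hX, rfl⟩
  rw [ciInf_fin_two_of_ne _ hij]
  -- agent `j` takes a piece of `X` worth at least `1/2` to it, agent `i` the other one
  rcases le_total (1 / 2) (bundleVal (v j) (X j)) with h | h
  · exact (hX.min_le_egalW hnorm hij h).trans (hA.2 X hX)
  · have hY := hX.connAlloc_giveTo_compl hij
    have hYi : giveTo i (X i)ᶜ i = X j := by rw [giveTo_self, hX.eq_compl hij]
    have hYj : giveTo i (X i)ᶜ j = X i := by rw [giveTo_of_ne hij, compl_compl]
    have h' : 1 / 2 ≤ bundleVal (v j) (X i) := by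
      rw [hX.eq_compl hij, bundleVal_compl, hnorm] at h
      linarith
    have := hY.min_le_egalW hnorm hij (by rwa [hYj])
    rw [hYi, hYj, min_comm] at this
    exact this.trans (hA.2 _ hY)

theorem IsEgalOptimal.optU_le (hpos : ∀ i e, 0 ≤ v i e) (hA : IsEgalOptimal 2 m v A)
    (hU : 1 ≤ utilW 2 m v A) : optU 2 m v ≤ 3 / 2 * utilW 2 m v A := by
  have h01 : (0 : Fin 2) ≠ 1 := by decide
  refine csSup_le ⟨_, A, hA.1, rfl⟩ ?_
  rintro _ ⟨B, hB, rfl⟩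
  have hEW := hA.2 B hB
  have hB0 := bundleVal_mono (hpos 0) (subset_univ (B 0))
  have hB1 := bundleVal_mono (hpos 1) (subset_univ (B 1))
  rw [hnorm] at hB0 hB1
  rw [egalW_two h01, egalW_two h01] at hEW
  rw [utilW_two h01] at hU
  rw [utilW_two h01, utilW_two h01]
  -- `UW(B) ≤ 1 + EW(B) ≤ 1 + EW(A) ≤ 1 + UW(A)/2`
  have := min_le_left (bundleVal (v 0) (A 0)) (bundleVal (v 1) (A 1))
  have := min_le_right (bundleVal (v 0) (A 0)) (bundleVal (v 1) (A 1))
  rcases le_total (bundleVal (v 0) (B 0)) (bundleVal (v 1) (B 1)) with h | h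
  · rw [min_eq_left h] at hEW; linarith
  · rw [min_eq_right h] at hEW; linarith

theorem IsEgalOptimal.exists_poorBundleCard_lt (hpos : ∀ i e, 0 ≤ v i e)
    (hA : IsEgalOptimal 2 m v A) (hij : i ≠ j) (hpoor : bundleVal (v i) (A i) < 1 / 2)
    (hstuck : ∀ e ∉ A i, IsConnBundle (insert e (A i)) →
      bundleVal (v i) (insert e (A i)) < 1 / 2) :
    ∃ B, IsEgalOptimal 2 m v B ∧ poorBundleCard 2 m v A < poorBundleCard 2 m v B := by
  have hAj := hA.1.eq_compl hij
  have hne : A i ≠ univ := by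
    rintro h
    rw [h, hnorm] at hpoor
    norm_num at hpoor
  obtain ⟨e, he, hT, hTc⟩ :=
    (hA.1.1 i).exists_insert_of_compl (hAj ▸ hA.1.1 j) hne
  set T := insert e (A i)
  have hTi := hstuck e he hT
  have hST : bundleVal (v i) (A i) ≤ bundleVal (v i) T :=
    bundleVal_mono (hpos i) (subset_insert _ _)
  have hEW := egalW_le_bundleVal v A i
  -- comparing with the allocation in which `i` gets `Tᶜ` and `j` gets `T`:
  -- `i` would get more than `1/2`, so `j` must value `T` at most `EW(A) < 1/2`
  have hTj : 1 / 2 < bundleVal (v j) Tᶜ := by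
    have hswap := hA.2 _ (connAlloc_giveTo (i := i) hTc (by rwa [compl_compl]))
    rw [egalW_two hij, giveTo_self, giveTo_of_ne hij, compl_compl, bundleVal_compl (v i),
      hnorm, min_le_iff] at hswap
    rw [bundleVal_compl, hnorm]
    rcases hswap with h | h <;> linarith
  have hSj : bundleVal (v j) Tᶜ ≤ bundleVal (v j) (A j) :=
    hAj ▸ bundleVal_mono (hpos j) (compl_subset_compl.2 (subset_insert _ _))
  refine ⟨giveTo i T, ⟨connAlloc_giveTo hT hTc, fun B hB => (hA.2 B hB).trans ?_⟩, ?_⟩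
  · rw [egalW_two (A := giveTo i T) hij, giveTo_self, giveTo_of_ne hij]
    exact le_min (hEW.trans hST) (by linarith)
  · simp only [poorBundleCard, Nat.cast_ofNat, Fin.univ_eq_pair_of_ne hij, sum_pair hij,
      giveTo_self, giveTo_of_ne hij]
    rw [if_pos hpoor, if_pos hTi, if_neg (by linarith), if_neg (by linarith),
      card_insert_of_notMem he]
    omega

theorem exists_isEgalOptimal_prop1Goods (hpos : ∀ i e, 0 ≤ v i e) :
    ∃ A, IsEgalOptimal 2 m v A ∧ Prop1Goods 2 m v A := by
  classical
  obtain ⟨A₀, hA₀⟩ := exists_isEgalOptimal v (connAlloc_giveTo (i := 0) (S := univ)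
    (fun _ _ _ _ _ _ _ => mem_univ _) (by simp [IsConnBundle]))
  obtain ⟨A, hA, hmax⟩ := exists_max_image (univ.filter (IsEgalOptimal 2 m v))
    (poorBundleCard 2 m v) ⟨A₀, by simpa using hA₀⟩
  rw [mem_filter] at hA
  refine ⟨A, hA.2, fun i => ?_⟩
  obtain ⟨j, hji⟩ := exists_ne i
  by_contra! h
  simp only [Nat.cast_ofNat] at h
  obtain ⟨B, hB, hlt⟩ := hA.2.exists_poorBundleCard_lt hnorm hpos hji.symm h.1 h.2
  exact (hmax B (by simpa using hB)).not_gt hlt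

end TwoAgents

/-- For every fair-goods instance with two agents, there exists a
connected allocation that is simultaneously MMS and PROP1, maximizes the egalitarian
welfare, and has utilitarian welfare at least `1` and at least `(2/3) · OPT_U`. -/
theorem goods_two_agents (m : ℕ) (v : Fin 2 → Fin m → ℝ)
    (hpos : ∀ i j, 0 ≤ v i j)
    (hnorm : ∀ i, bundleVal (v i) Finset.univ = 1) :
    ∃ A : Fin 2 → Finset (Fin m), ConnAlloc 2 m A ∧
      (∀ i, mmsVal 2 m (v i) ≤ bundleVal (v i) (A i)) ∧
      Prop1Goods 2 m v A ∧
      egalW 2 m v A = optE 2 m v ∧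
      (1 : ℝ) ≤ utilW 2 m v A ∧
      (2 / 3 : ℝ) * optU 2 m v ≤ utilW 2 m v A := by
  obtain ⟨A, hA, hprop⟩ := exists_isEgalOptimal_prop1Goods hnorm hpos
  have hU := hA.one_le_utilW hnorm
  refine ⟨A, hA.1, fun i => (hA.mmsVal_le hnorm i).trans (egalW_le_bundleVal v A i), hprop,
    hA.optE_eq.symm, hU, ?_⟩
  linarith [hA.optU_le hnorm hpos hU]
end
end
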